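/- arXiv:math/0310027 — 3 statements merged into one kernel-verified Lean document; each statement's English description precedes it below -/
import Mathlib

section
/- The function ρ: H_ℂ → ℝ₊ given on the matrix with entries x, y, z by ρ = exp((1/(2πi))·(π₁(z) − π₁(x)π₀(y))) is invariant under right multiplication by elements of H_ℤ, i.e. ρ(x + m₁, y + n₁, z + m₁y + m₂) = ρ(x, y, z) for all m₁, n₁ ∈ 2πiℤ and m₂ ∈ (2πi)²ℤ. -/
noncomputable section

/-- Real-part projection `π₀(z) = (z + z̄)/2`. -/
def pi0 (w : ℂ) : ℂ := (w + (starRingEnd ℂ) w) / 2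

/-- Imaginary-part projection `π₁(z) = (z - z̄)/2`. -/
def pi1 (w : ℂ) : ℂ := (w - (starRingEnd ℂ) w) / 2

/-- `2πi`. -/
def twoPiI : ℂ := 2 * Real.pi * Complex.I

/-- The hermitian metric `ρ(x,y,z) = exp((1/2πi)(π₁(z) − π₁(x)π₀(y)))` on the Heisenberg
group is invariant under the right `H_ℤ` action
`(x,y,z) ↦ (x+m₁, y+n₁, z+m₁y+m₂)` with `m₁, n₁ ∈ 2πiℤ`, `m₂ ∈ (2πi)²ℤ`. -/
theorem stmt3 (x y z m1 n1 m2 : ℂ)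
    (hm1 : ∃ k : ℤ, m1 = twoPiI * k)
    (hn1 : ∃ k : ℤ, n1 = twoPiI * k)
    (hm2 : ∃ k : ℤ, m2 = twoPiI ^ 2 * k) :
    Complex.exp ((1 / twoPiI) *
        (pi1 (z + m1 * y + m2) - pi1 (x + m1) * pi0 (y + n1)))
      = Complex.exp ((1 / twoPiI) * (pi1 z - pi1 x * pi0 y)) := by
  obtain ⟨a, ha⟩ := hm1
  obtain ⟨b, hb⟩ := hn1
  obtain ⟨c, hc⟩ := hm2
  subst ha hb hc
  congr 1
  simp only [pi0, pi1, twoPiI, map_add, map_mul, map_pow, Complex.conj_I,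
    Complex.conj_ofReal, map_intCast, map_ofNat]
  ring

end
end

section
/- For invertible holomorphic functions f, g with local branches log_i f of the logarithm of f, let ω_i = log_i f · dg/g and σ_i = −π₁(log_i f)·log|g|. Then π₁(ω_i) + dσ_i = −r₂(f,g), where r₂(f,g) = π₁(d log f)·log|g| − log|f|·π₁(d log g). -/
/-!
Write `σ = −π₁(L)·log|g|`. Since `π₁` is `ℝ`-linear and `d log|g| = Re(dg/g) = π₀(dg/g)`,
the Leibniz rule gives `dσ = −π₁(dL)·log|g| − π₁(L)·π₀(dg/g)`. On the other hand
`π₁(L·dg/g) = π₁(L)·π₀(dg/g) + π₀(L)·π₁(dg/g)` (the imaginary part of a product), so the terms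
`π₁(L)·π₀(dg/g)` cancel. What remains is `−r₂(f,g)` because `dL = df/f` and `π₀(L) = log|f|`
for a branch `L` of `log f`.
-/

noncomputable section

open Complex

lemma pi0_eq_re (w : ℂ) : pi0 w = w.re := by
  rw [pi0, add_conj]; push_cast; ring

lemma pi1_eq_im_mul_I (w : ℂ) : pi1 w = w.im * I := by
  rw [pi1, sub_conj]; push_cast; ring

lemma pi1_mul (z w : ℂ) : pi1 (z * w) = pi1 z * pi0 w + pi0 z * pi1 w := by
  simp only [pi0_eq_re, pi1_eq_im_mul_I, mul_im]; push_cast; ring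

def pi1CLM : ℂ →L[ℝ] ℂ := I • (ofRealCLM.comp imCLM)

@[simp] lemma pi1CLM_apply (w : ℂ) : pi1CLM w = pi1 w := by
  simp [pi1CLM, pi1_eq_im_mul_I, mul_comm]

section

variable {E : Type*} [NormedAddCommGroup E]

lemma HasFDerivAt.pi1 [NormedSpace ℝ E] {F : E → ℂ} {F' : E →L[ℝ] ℂ} {x : E}
    (h : HasFDerivAt F F' x) : HasFDerivAt (fun w => pi1 (F w)) (pi1CLM.comp F') x := by
  simpa [Function.comp_def] using pi1CLM.hasFDerivAt.comp x h

/-- Near `x`, `log ‖g‖ = Re (log (g / g x)) + log ‖g x‖`, and `g / g x` stays close to `1`, inside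
the slit plane where `Complex.log` is holomorphic. -/
lemma HasFDerivAt.log_norm [NormedSpace ℂ E] {g : E → ℂ} {g' : StrongDual ℂ E} {x : E}
    (hg : HasFDerivAt g g' x) (hx : g x ≠ 0) :
    HasFDerivAt (fun w => Real.log ‖g w‖) (reCLM.comp (((g x)⁻¹ • g').restrictScalars ℝ)) x := by
  have hq : HasFDerivAt (fun w => g w / g x) ((g x)⁻¹ • g') x := by
    simpa [div_eq_mul_inv, mul_comm] using hg.mul_const (g x)⁻¹
  have hlog := hq.clog (by simp [div_self hx])
  rw [div_self hx, inv_one, one_smul] at hlog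
  refine ((reCLM.hasFDerivAt.comp x (hlog.restrictScalars ℝ)).add_const
    (Real.log ‖g x‖)).congr_of_eventuallyEq ?_
  filter_upwards [hg.continuousAt.eventually_ne hx] with w hw
  simp [log_re, Real.log_div (norm_ne_zero_iff.mpr hw) (norm_ne_zero_iff.mpr hx)]

end

theorem stmt10_general (f g L : ℂ → ℂ) (u v : ℂ)
    (hL : ∀ w, Complex.exp (L w) = f w)
    (hg0 : g u ≠ 0)
    (hLd : DifferentiableAt ℂ L u) (hgd : DifferentiableAt ℂ g u) :
    pi1 (L u * (deriv g u / g u) * v)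
      + fderiv ℝ (fun w => -(pi1 (L w)) * (Real.log (‖g w‖) : ℂ)) u v
    = -(pi1 (deriv f u / f u * v) * (Real.log (‖g u‖) : ℂ)
        - (Real.log (‖f u‖) : ℂ) * pi1 (deriv g u / g u * v)) := by
  have hlogDeriv : deriv f u / f u = deriv L u := by
    rw [← logDeriv_apply, show f = exp ∘ L from funext fun w => (hL w).symm,
      logDeriv_comp differentiableAt_exp hLd, logDeriv_exp, Pi.one_apply, one_mul]
  have hlog_norm : Real.log ‖f u‖ = (L u).re := by
    rw [← hL u, norm_exp, Real.log_exp]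
  have hσ : HasFDerivAt (fun w => -pi1 (L w) * (Real.log ‖g w‖ : ℂ)) _ u :=
    (hLd.hasDerivAt.hasFDerivAt.restrictScalars ℝ).pi1.neg.mul
      (ofRealCLM.hasFDerivAt.comp u (hgd.hasDerivAt.hasFDerivAt.log_norm hg0))
  rw [hσ.fderiv]
  simp only [add_apply, smul_apply, neg_apply, ContinuousLinearMap.coe_comp,
    Function.comp_apply, ContinuousLinearMap.coe_restrictScalars',
    ContinuousLinearMap.toSpanSingleton_apply, smul_eq_mul, reCLM_apply, ofRealCLM_apply,
    pi1CLM_apply, Pi.neg_apply, ← pi0_eq_re, hlogDeriv, hlog_norm]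
  rw [mul_assoc, pi1_mul]
  ring_nf

/-- The computation of Proposition 4.6 of the paper: with `L` a branch of `log f`
(so `exp ∘ L = f`), `ω = L · dg/g` and `σ = −π₁(L)·log|g|`, evaluating the 1-forms
on a tangent vector `v` at `u` one has `π₁(ω)(v) + dσ(v) = −r₂(f,g)(v)`, where
`r₂(f,g) = π₁(d log f)·log|g| − log|f|·π₁(d log g)`. -/
theorem stmt10 (f g L : ℂ → ℂ) (u v : ℂ)
    (hL : ∀ w, Complex.exp (L w) = f w)
    (hf0 : f u ≠ 0) (hg0 : g u ≠ 0)
    (hLd : DifferentiableAt ℂ L u) (hgd : DifferentiableAt ℂ g u)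
    (hfd : DifferentiableAt ℂ f u) :
    pi1 (L u * (deriv g u / g u) * v)
      + fderiv ℝ (fun w => -(pi1 (L w)) * (Real.log (‖g w‖) : ℂ)) u v
    = -(pi1 (deriv f u / f u * v) * (Real.log (‖g u‖) : ℂ)
        - (Real.log (‖f u‖) : ℂ) * pi1 (deriv g u / g u * v)) :=
  stmt10_general f g L u v hL hg0 hLd hgd
end
end

section
/- Let M be the unipotent lower-triangular matrix [[1,0,0],[x,1,0],[z,y,1]] over ℂ. Then its inverse is [[1,0,0],[−x,1,0],[xy−z,−y,1]], and the Goncharov big period P = Σ_k ⟨f₂, M v_k⟩ ⊗ ⟨f_k, M⁻¹ v₀⟩ (with v_k columns of A = [[1,0,0],[x,2πi,0],[z,2πi·y,(2πi)²]] and f_k the dual basis) equals z/(2πi)² ⊗ 1 − 1 ⊗ z/(2πi)² + 1 ⊗ xy/(2πi)² − y/(2πi) ⊗ x/(2πi) in ℂ ⊗_ℚ ℂ. -/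
/-!
The period matrix factors as `A = M * D` with `D = diagonal (1, c, c²)`, `c = 2πi`. Since `M` commutes
with itself and with `M⁻¹`, conjugating either of them by `A` is the same as conjugating by `D`,
which only rescales the `(i, j)` entry by `c ^ (j - i)`. The big period is then the three-term sum
pairing the last row of `M` with the first column of `M⁻¹`, both rescaled.
-/

open Matrix TensorProduct

namespace Matrix

variable {n : Type*} [Fintype n] [DecidableEq n]

theorem mul_inv_mul_mul_of_commute {R : Type*} [CommRing R] {M N : Matrix n n R}
    (hM : IsUnit M.det) (hMN : Commute M N) (B : Matrix n n R) :
    (M * B)⁻¹ * N * (M * B) = B⁻¹ * N * B := by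
  rw [mul_inv_rev, ← Matrix.mul_assoc, Matrix.mul_assoc _ N, ← hMN.eq, Matrix.mul_assoc _ M⁻¹,
    nonsing_inv_mul_cancel_left M N hM]

theorem diagonal_inv_mul_mul_diagonal_apply {K : Type*} [Field K] {d : n → K}
    (hd : ∀ i, d i ≠ 0) (N : Matrix n n K) (i j : n) :
    ((diagonal d)⁻¹ * N * diagonal d) i j = N i j * d j / d i := by
  have hinv : (diagonal d)⁻¹ = diagonal fun i ↦ (d i)⁻¹ :=
    inv_eq_left_inv <| by simp [diagonal_mul_diagonal, inv_mul_cancel₀ (hd _)]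
  rw [hinv, mul_diagonal, diagonal_mul]
  ring

end Matrix

section UnitriangularThree

variable {R : Type*} [CommRing R]

theorem lowerUnitriangular_mul_inv (x y z : R) :
    !![1, 0, 0; x, 1, 0; z, y, 1] * !![1, 0, 0; -x, 1, 0; x * y - z, -y, 1] = 1 := by
  rw [mul_fin_three, one_fin_three]
  congr <;> ring

theorem periodMatrix_eq_mul_diagonal (x y z c : R) :
    !![1, 0, 0; x, c, 0; z, c * y, c ^ 2] =
      !![1, 0, 0; x, 1, 0; z, y, 1] * diagonal ![1, c, c ^ 2] := by
  rw [diagonal_vec3, mul_fin_three]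
  congr <;> ring

end UnitriangularThree

theorem bigPeriod_eq {S K : Type*} [CommSemiring S] [Field K] [Algebra S K] (x y z : K) {c : K}
    (hc : c ≠ 0) :
    ∑ k : Fin 3,
      ((!![1, 0, 0; x, c, 0; z, c * y, c ^ 2]⁻¹ * !![1, 0, 0; x, 1, 0; z, y, 1] *
          !![1, 0, 0; x, c, 0; z, c * y, c ^ 2]) 2 k) ⊗ₜ[S]
        ((!![1, 0, 0; x, c, 0; z, c * y, c ^ 2]⁻¹ * !![1, 0, 0; -x, 1, 0; x * y - z, -y, 1] *
          !![1, 0, 0; x, c, 0; z, c * y, c ^ 2]) k 0)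
      = (z / c ^ 2) ⊗ₜ[S] 1 - 1 ⊗ₜ[S] (z / c ^ 2)
          + 1 ⊗ₜ[S] (x * y / c ^ 2) - (y / c) ⊗ₜ[S] (x / c) := by
  set M : Matrix (Fin 3) (Fin 3) K := !![1, 0, 0; x, 1, 0; z, y, 1]
  set Minv : Matrix (Fin 3) (Fin 3) K := !![1, 0, 0; -x, 1, 0; x * y - z, -y, 1]
  set D : Matrix (Fin 3) (Fin 3) K := diagonal ![1, c, c ^ 2]
  have hM : M * Minv = 1 := lowerUnitriangular_mul_inv x y z
  have hA : !![1, 0, 0; x, c, 0; z, c * y, c ^ 2] = M * D := periodMatrix_eq_mul_diagonal x y z c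
  have hd : ∀ i, ![1, c, c ^ 2] i ≠ 0 := by
    intro i; fin_cases i <;> simp [hc]
  have hMdet : IsUnit M.det := isUnit_det_of_right_inverse hM
  have hconj_M : (M * D)⁻¹ * M * (M * D) = D⁻¹ * M * D :=
    mul_inv_mul_mul_of_commute hMdet (Commute.refl M) D
  have hconj_Minv : (M * D)⁻¹ * Minv * (M * D) = D⁻¹ * Minv * D :=
    mul_inv_mul_mul_of_commute hMdet (hM.trans (mul_eq_one_comm.mp hM).symm) D
  rw [hA, hconj_M, hconj_Minv]
  simp only [D, diagonal_inv_mul_mul_diagonal_apply hd, Fin.sum_univ_three]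
  have h1 : y * c / c ^ 2 = y / c := by field_simp
  have h2 : c ^ 2 / c ^ 2 = 1 := div_self (pow_ne_zero 2 hc)
  have h3 : (x * y - z) / c ^ 2 = x * y / c ^ 2 - z / c ^ 2 := sub_div _ _ _
  simp only [M, Minv, of_apply, cons_val', cons_val_zero, cons_val_fin_one, cons_val,
    cons_val_one, mul_one, one_mul, div_one, h1, h2, h3, neg_div, tmul_neg, tmul_sub]
  abel

/-- Computation of Goncharov's big period (equation (31) of the paper): with
`M = [[1,0,0],[x,1,0],[z,y,1]]`, its inverse is `[[1,0,0],[−x,1,0],[xy−z,−y,1]]`,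
and, pairing via the period matrix `A = [[1,0,0],[x,2πi,0],[z,2πi·y,(2πi)²]]`
(so that `⟨f₂, M v_k⟩ = (A⁻¹MA)_{2,k}` and `⟨f_k, M⁻¹ v₀⟩ = (A⁻¹M⁻¹A)_{k,0}`),
`P = Σ_k ⟨f₂, M v_k⟩ ⊗ ⟨f_k, M⁻¹ v₀⟩`
`  = z/(2πi)² ⊗ 1 − 1 ⊗ z/(2πi)² + 1 ⊗ xy/(2πi)² − y/(2πi) ⊗ x/(2πi)` in `ℂ ⊗_ℚ ℂ`. -/
theorem stmt12 (x y z : ℂ) :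
    letI c : ℂ := 2 * Real.pi * Complex.I
    letI M : Matrix (Fin 3) (Fin 3) ℂ := !![1, 0, 0; x, 1, 0; z, y, 1]
    letI Minv : Matrix (Fin 3) (Fin 3) ℂ := !![1, 0, 0; -x, 1, 0; x * y - z, -y, 1]
    letI A : Matrix (Fin 3) (Fin 3) ℂ := !![1, 0, 0; x, c, 0; z, c * y, c ^ 2]
    M * Minv = 1 ∧
      (∑ k : Fin 3,
        ((A⁻¹ * M * A) 2 k) ⊗ₜ[ℚ] ((A⁻¹ * Minv * A) k 0))
      = (z / c ^ 2) ⊗ₜ[ℚ] 1 - 1 ⊗ₜ[ℚ] (z / c ^ 2)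
          + 1 ⊗ₜ[ℚ] (x * y / c ^ 2) - (y / c) ⊗ₜ[ℚ] (x / c) :=
  ⟨lowerUnitriangular_mul_inv x y z, bigPeriod_eq x y z Complex.two_pi_I_ne_zero⟩
end
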